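/- Let μ be the standard Gaussian measure on ℝⁿ, given by μ(A) = (2π)^{-n/2} ∫_A e^{-|x|²/2} dλ(x) with λ the Lebesgue measure, and let B_rⁿ be the closed Euclidean ball of radius r > 0 centered at the origin. Then μ(B_rⁿ) ≤ (√e · r / √n)ⁿ. -/

import Mathlib

open Real Set MeasureTheory ENNReal

noncomputable section

/-- The standard Gaussian measure on `ℝⁿ`, with density `(2π)^{-n/2} e^{-|x|²/2}` with
respect to Lebesgue measure. -/
def gaussianMeasure (n : ℕ) : Measure (EuclideanSpace ℝ (Fin n)) :=
  volume.withDensity fun x =>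
    ENNReal.ofReal ((2 * π) ^ (-(n : ℝ) / 2) * Real.exp (-‖x‖ ^ 2 / 2))

/-!
For `t ≥ 1` and `|x| ≤ r` we have `e^{-|x|²/2} ≤ e^{(t-1)r²/2} e^{-t|x|²/2}`, and integrating the
right-hand side over all of `ℝⁿ` gives `μ(B_rⁿ) ≤ e^{(t-1)r²/2} t^{-n/2}`. The choice `t = n/r²`
(when `r² ≤ n`) yields `e^{(n-r²)/2} (r/√n)ⁿ ≤ (√e·r/√n)ⁿ`; when `r² > n` the choice `t = 1`
gives `μ(B_rⁿ) ≤ 1`, which is already below the bound.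
-/

lemma rpow_neg_natCast_div_two {t : ℝ} (ht : 0 ≤ t) (n : ℕ) :
    t ^ (-(n : ℝ) / 2) = (√t ^ n)⁻¹ := by
  rw [neg_div, rpow_neg ht, sqrt_eq_rpow, ← Real.rpow_natCast, ← rpow_mul ht]
  ring_nf

lemma integral_normalized_rexp_neg_mul_sq_norm {V : Type*} [NormedAddCommGroup V]
    [InnerProductSpace ℝ V] [FiniteDimensional ℝ V] [MeasurableSpace V] [BorelSpace V]
    {t : ℝ} (ht : 0 < t) :
    ∫ x : V, (2 * π) ^ (-(Module.finrank ℝ V : ℝ) / 2) * rexp (-(t / 2) * ‖x‖ ^ 2) =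
      (√t ^ Module.finrank ℝ V)⁻¹ := by
  rw [integral_const_mul, GaussianFourier.integral_rexp_neg_mul_sq_norm (by positivity),
    div_div_eq_mul_div, mul_comm π 2, div_rpow (by positivity) ht.le, ← mul_div_assoc,
    ← rpow_add (by positivity), neg_div, neg_add_cancel, Real.rpow_zero, one_div, ← rpow_neg ht.le,
    ← neg_div, rpow_neg_natCast_div_two ht.le]

lemma gaussianMeasure_closedBall_le_of_one_le (n : ℕ) (r : ℝ) {t : ℝ} (ht : 1 ≤ t) :
    gaussianMeasure n (Metric.closedBall 0 r) ≤
      ENNReal.ofReal (rexp ((t - 1) * r ^ 2 / 2) / √t ^ n) := by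
  have ht0 : 0 < t := zero_lt_one.trans_le ht
  set c : ℝ := (2 * π) ^ (-(n : ℝ) / 2)
  set g : EuclideanSpace ℝ (Fin n) → ℝ := fun x => c * rexp (-(t / 2) * ‖x‖ ^ 2)
  have hg_int : ∫ x, g x = (√t ^ n)⁻¹ := by
    simpa only [finrank_euclideanSpace_fin] using
      integral_normalized_rexp_neg_mul_sq_norm (V := EuclideanSpace ℝ (Fin n)) ht0
  have hg : Integrable g := .of_integral_ne_zero (by rw [hg_int]; positivity)
  have hdensity_le : ∀ x ∈ Metric.closedBall (0 : EuclideanSpace ℝ (Fin n)) r,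
      ENNReal.ofReal (c * rexp (-‖x‖ ^ 2 / 2)) ≤
        ENNReal.ofReal (rexp ((t - 1) * r ^ 2 / 2) * g x) := by
    intro x hx
    have hxr : ‖x‖ ^ 2 ≤ r ^ 2 := pow_le_pow_left₀ (norm_nonneg x) (mem_closedBall_zero_iff.1 hx) 2
    refine ENNReal.ofReal_le_ofReal ?_
    rw [mul_left_comm, ← exp_add]
    gcongr
    nlinarith
  calc gaussianMeasure n (Metric.closedBall 0 r)
      = ∫⁻ x in Metric.closedBall 0 r, ENNReal.ofReal (c * rexp (-‖x‖ ^ 2 / 2)) :=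
        withDensity_apply _ measurableSet_closedBall
    _ ≤ ∫⁻ x in Metric.closedBall 0 r, ENNReal.ofReal (rexp ((t - 1) * r ^ 2 / 2) * g x) :=
        setLIntegral_mono' measurableSet_closedBall hdensity_le
    _ ≤ ∫⁻ x, ENNReal.ofReal (rexp ((t - 1) * r ^ 2 / 2) * g x) :=
        setLIntegral_le_lintegral _ _
    _ = ENNReal.ofReal (∫ x, rexp ((t - 1) * r ^ 2 / 2) * g x) :=
        (ofReal_integral_eq_lintegral_ofReal (hg.const_mul _)
          (.of_forall fun x => by positivity)).symm
    _ = ENNReal.ofReal (rexp ((t - 1) * r ^ 2 / 2) / √t ^ n) := by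
        rw [integral_const_mul, hg_int, ← div_eq_mul_inv]

theorem gaussian_measure_ball_le_general
    (n : ℕ) (r : ℝ) (hr : 0 < r) :
    gaussianMeasure n (Metric.closedBall (0 : EuclideanSpace ℝ (Fin n)) r) ≤
      ENNReal.ofReal ((Real.sqrt (Real.exp 1) * r / Real.sqrt n) ^ n) := by
  rcases le_or_gt (r ^ 2) n with hrn | hnr
  · have ht : 1 ≤ (n : ℝ) / r ^ 2 := (one_le_div (by positivity)).2 hrn
    refine (gaussianMeasure_closedBall_le_of_one_le n r ht).trans (ENNReal.ofReal_le_ofReal ?_)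
    calc rexp (((n : ℝ) / r ^ 2 - 1) * r ^ 2 / 2) / √((n : ℝ) / r ^ 2) ^ n
        = rexp ((n - r ^ 2) / 2) * (r / √n) ^ n := by
          rw [sqrt_div' _ (by positivity), sqrt_sq hr.le, div_pow, div_pow]
          field_simp
      _ ≤ rexp (n * (1 / 2)) * (r / √n) ^ n := by gcongr; linarith [sq_nonneg r]
      _ = (√(rexp 1) * r / √n) ^ n := by
          rw [exp_nat_mul, ← exp_half, mul_div_assoc, mul_pow, one_div]
  · refine (gaussianMeasure_closedBall_le_of_one_le n r le_rfl).trans ?_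
    simp only [sub_self, zero_mul, zero_div, exp_zero, sqrt_one, one_pow, div_one]
    refine ENNReal.ofReal_le_ofReal ?_
    rcases n.eq_zero_or_pos with rfl | hn
    · simp
    refine one_le_pow₀ ((one_le_div (by positivity)).2 ?_)
    calc √n ≤ r := ((sqrt_lt' hr).2 hnr).le
      _ ≤ √(rexp 1) * r := le_mul_of_one_le_left hr.le (one_le_sqrt.2 (one_le_exp zero_le_one))

/-- The standard Gaussian measure of the closed Euclidean ball of radius
`r > 0` centered at the origin in `ℝⁿ` is at most `(√e · r / √n)ⁿ`. -/
theorem gaussian_measure_ball_le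
    (n : ℕ) (hn : 1 ≤ n) (r : ℝ) (hr : 0 < r) :
    gaussianMeasure n (Metric.closedBall (0 : EuclideanSpace ℝ (Fin n)) r) ≤
      ENNReal.ofReal ((Real.sqrt (Real.exp 1) * r / Real.sqrt n) ^ n) :=
  gaussian_measure_ball_le_general n r hr
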